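/- Let A/ℚ be a principally polarized abelian variety of dimension d, let ℓ be a rational prime, and let ρ̄_{A,ℓ} : Gal(ℚ̄/ℚ) → GSp_{2d}(𝔽_ℓ) be the mod ℓ representation of A. If ρ̄_{A,ℓ} is surjective, then 𝒞_ℓ(A) ≠ ∅, i.e. there exists σ ∈ Gal(ℚ(A[ℓ])/ℚ(ζ_ℓ)) acting freely on A[ℓ]. -/

import Mathlib

/-- The multiplicative group structure (composition) that older Mathlib put on `AddAut M`. -/
instance AddAut.group (M : Type*) [Add M] : Group (AddAut M) where
  mul g h := AddEquiv.trans h g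
  one := AddEquiv.refl _
  inv := AddEquiv.symm
  mul_assoc _ _ _ := rfl
  one_mul _ := rfl
  mul_one _ := rfl
  inv_mul_cancel := AddEquiv.self_trans_symm

/-- The data of an abelian variety `A` over `ℚ`: the Mordell–Weil groups `A(L)` of
extensions `L/ℚ`; the conductor `N_A`; the groups `A(𝔽_p)` of points of the reduction at a
good prime `p` (`p` is of good reduction iff `p ∤ N_A`); the sets of `S`-integral points of
the punctured variety `A ∖ {0}` over `O_{L,S}` (`S` a set of rational primes, `O_{L,S}` the
ring of `T`-integers for `T` the places above `S`); the `n`-torsion `A[n]` of `A(ℚ̄)` with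
its Galois action; and a choice of Frobenius element at each prime. -/
structure AbelianVarietyQ : Type 1 where
  /-- the Mordell–Weil group `A(L)` -/
  Point : (L : Type) → [Field L] → [Algebra ℚ L] → Type
  instAddCommGroup : ∀ (L : Type) [Field L] [Algebra ℚ L], AddCommGroup (Point L)
  /-- the conductor `N_A` of `A`; a prime `p ∤ N_A` is a prime of good reduction -/
  conductor : ℕ
  conductor_pos : 0 < conductor
  /-- the group `A(𝔽_p)` of points of the reduction of `A` modulo a good prime `p` -/
  ResPoint : ℕ → Type
  instResAddCommGroup : ∀ p, AddCommGroup (ResPoint p)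
  instResFinite : ∀ p, Finite (ResPoint p)
  /-- the set `(A ∖ {0})(O_{L,S})` of `S`-integral points of the punctured abelian variety,
  viewed inside `A(L)`; here `S` is a set of rational primes and `O_{L,S}` is the ring of
  `T`-integers of `L` where `T` is the set of places of `L` above the primes of `S` -/
  puncturedIntegralPoints : (L : Type) → [Field L] → [Algebra ℚ L] → Set ℕ → Set (Point L)
  /-- the `n`-torsion subgroup `A[n]` of `A(ℚ̄)` -/
  tors : ℕ → Type
  instTorsAddCommGroup : ∀ n, AddCommGroup (tors n)
  instTorsFinite : ∀ n, Finite (tors n)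
  tors_nsmul : ∀ n (x : tors n), n • x = 0
  /-- the Galois action of `Gal(ℚ̄/ℚ)` on `A[n]` -/
  galRep : (n : ℕ) →
    (AlgebraicClosure ℚ ≃ₐ[ℚ] AlgebraicClosure ℚ) →* AddAut (tors n)
  /-- a choice of Frobenius element at each prime `p` -/
  frob : ℕ → (AlgebraicClosure ℚ ≃ₐ[ℚ] AlgebraicClosure ℚ)
  /-- a Frobenius element at a good prime `p` acts on roots of unity of order prime to `p`
  by raising to the `p`-th power -/
  frob_spec : ∀ p : ℕ, p.Prime → ¬ p ∣ conductor →
    ∀ x : AlgebraicClosure ℚ, (∃ k : ℕ, 0 < k ∧ ¬ p ∣ k ∧ x ^ k = 1) →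
      frob p x = x ^ p

attribute [instance] AbelianVarietyQ.instAddCommGroup AbelianVarietyQ.instResAddCommGroup
  AbelianVarietyQ.instResFinite AbelianVarietyQ.instTorsAddCommGroup
  AbelianVarietyQ.instTorsFinite

/-- `H_ℓ(A) = Gal(ℚ(A[ℓ])/ℚ(ζ_ℓ))`, realized as the image, under the mod-`ℓ` representation,
of the subgroup of `Gal(ℚ̄/ℚ)` fixing `ℚ(ζ_ℓ)`; it is a subgroup of
`G_ℓ(A) = Gal(ℚ(A[ℓ])/ℚ)`, the image of the full representation. -/
noncomputable def AbelianVarietyQ.Hl (A : AbelianVarietyQ) (ℓ : ℕ) : Subgroup (AddAut (A.tors ℓ)) :=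
  Subgroup.map (A.galRep ℓ)
    (IntermediateField.fixingSubgroup
      (IntermediateField.adjoin ℚ {x : AlgebraicClosure ℚ | x ^ ℓ = 1}))

/-- `𝒞_ℓ(A)`: the set of elements of `H_ℓ(A)` acting freely on `A[ℓ]` (fixing no nonzero
torsion point). -/
def AbelianVarietyQ.Cl (A : AbelianVarietyQ) (ℓ : ℕ) : Set (AddAut (A.tors ℓ)) :=
  {g | g ∈ A.Hl ℓ ∧ ∀ x : A.tors ℓ, g x = x → x = 0}

/-- The general symplectic group `GSp_{2d}(𝔽_ℓ)` (symplectic similitudes): matrices `M` with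
`M J Mᵀ = ν J` for some nonzero similitude factor `ν`. -/
def GSpSet (d ℓ : ℕ) : Set (Matrix (Fin d ⊕ Fin d) (Fin d ⊕ Fin d) (ZMod ℓ)) :=
  {M | ∃ ν : (ZMod ℓ)ˣ,
    M * Matrix.J (Fin d) (ZMod ℓ) * M.transpose = (ν : ZMod ℓ) • Matrix.J (Fin d) (ZMod ℓ)}

/-!
Gal(ℚ̄/ℚ) acts on the ℓ-th roots of unity through the abelian group (ℤ/ℓ)ˣ, so every commutator
fixes ℚ(ζ_ℓ) and its image lies in H_ℓ(A). By surjectivity pick σ, τ acting on A[ℓ] by the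
symplectic matrices [[1, 1], [0, 1]] and [[1, 0], [1, 1]] (in d × d blocks). Their commutator acts
by M = [[3, -1], [1, 0]], and M - 1 is invertible already over ℤ, so ⁅σ, τ⁆ fixes no nonzero
point of A[ℓ].
-/

open scoped commutatorElement

theorem map_map_comm_of_pow_eq_one {R F : Type*} [CommRing R] [IsDomain R] [FunLike F R R]
    [MonoidHomClass F R R] {n : ℕ} [NeZero n] (f g : F) {x : R} (hx : x ^ n = 1) :
    f (g x) = g (f x) := by
  obtain ⟨a, ha⟩ := map_rootsOfUnity_eq_pow_self f (rootsOfUnity.mkOfPowEq x hx)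
  obtain ⟨b, hb⟩ := map_rootsOfUnity_eq_pow_self g (rootsOfUnity.mkOfPowEq x hx)
  simp only [rootsOfUnity.coe_mkOfPowEq] at ha hb
  rw [hb, map_pow, ha, map_pow, hb, ← pow_mul, ← pow_mul, mul_comm]

theorem AlgEquiv.commutatorElement_apply_of_pow_eq_one {K L : Type*} [CommRing K] [CommRing L]
    [IsDomain L] [Algebra K L] {n : ℕ} [NeZero n] (σ τ : L ≃ₐ[K] L) {x : L} (hx : x ^ n = 1) :
    ⁅σ, τ⁆ x = x := by
  have hy : (σ⁻¹ (τ⁻¹ x)) ^ n = 1 := by simp only [← map_pow, hx, map_one]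
  change σ (τ (σ⁻¹ (τ⁻¹ x))) = x
  rw [map_map_comm_of_pow_eq_one σ τ hy]
  simp

theorem IntermediateField.mem_fixingSubgroup_adjoin_iff {F E : Type*} [Field F] [Field E]
    [Algebra F E] {S : Set E} {σ : E ≃ₐ[F] E} :
    σ ∈ (adjoin F S).fixingSubgroup ↔ ∀ x ∈ S, σ x = x := by
  rw [mem_fixingSubgroup_iff]
  refine ⟨fun h x hx => h x (subset_adjoin F S hx), fun h x hx => ?_⟩
  induction hx using adjoin_induction with
  | mem y hy => exact h y hy
  | algebraMap y => exact σ.commutes y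
  | add y z _ _ hy hz => rw [map_add, hy, hz]
  | inv y _ hy => rw [map_inv₀, hy]
  | mul y z _ _ hy hz => rw [map_mul, hy, hz]

theorem AlgEquiv.commutatorElement_mem_fixingSubgroup_adjoin_rootsOfUnity {F E : Type*} [Field F]
    [Field E] [Algebra F E] {n : ℕ} [NeZero n] (σ τ : E ≃ₐ[F] E) :
    ⁅σ, τ⁆ ∈ (IntermediateField.adjoin F {x : E | x ^ n = 1}).fixingSubgroup :=
  IntermediateField.mem_fixingSubgroup_adjoin_iff.2 fun _ hx =>
    commutatorElement_apply_of_pow_eq_one σ τ hx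

theorem MonoidHom.map_inv_eq_of_mul_eq_one {G M : Type*} [Group G] [Monoid M] (f : G →* M)
    {g : G} {a : M} (h : f g * a = 1) : f g⁻¹ = a :=
  left_inv_eq_right_inv (by rw [← map_mul, inv_mul_cancel, map_one]) h

theorem MonoidHom.map_commutatorElement_of_mul_eq_one {G M : Type*} [Group G] [Monoid M]
    (f : G →* M) {g h : G} {a b : M} (ha : f g * a = 1) (hb : f h * b = 1) :
    f ⁅g, h⁆ = f g * f h * a * b := by
  rw [commutatorElement_def, map_mul, map_mul, map_mul, f.map_inv_eq_of_mul_eq_one ha,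
    f.map_inv_eq_of_mul_eq_one hb]

namespace Matrix

variable {n R : Type*} [Fintype n] [DecidableEq n]

theorem fromBlocks_upper_unitriangular_mem_symplecticGroup [CommRing R] {B : Matrix n n R}
    (hB : Bᵀ = B) : fromBlocks 1 B 0 1 ∈ symplecticGroup n R := by
  simp [SymplecticGroup.mem_iff, J, fromBlocks_transpose, fromBlocks_multiply, hB]

theorem fromBlocks_lower_unitriangular_mem_symplecticGroup [CommRing R] {C : Matrix n n R}
    (hC : Cᵀ = C) : fromBlocks 1 0 C 1 ∈ symplecticGroup n R := by
  simp [SymplecticGroup.mem_iff, J, fromBlocks_transpose, fromBlocks_multiply, hC]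

theorem fromBlocks_upper_unitriangular_mul [Ring R] (B B' : Matrix n n R) :
    (fromBlocks 1 B 0 1 * fromBlocks 1 B' 0 1 : Matrix (n ⊕ n) (n ⊕ n) R) =
      fromBlocks 1 (B + B') 0 1 := by
  simp [fromBlocks_multiply, add_comm]

theorem fromBlocks_lower_unitriangular_mul [Ring R] (C C' : Matrix n n R) :
    (fromBlocks 1 0 C 1 * fromBlocks 1 0 C' 1 : Matrix (n ⊕ n) (n ⊕ n) R) =
      fromBlocks 1 0 (C + C') 1 := by
  simp [fromBlocks_multiply, add_comm]

theorem fromBlocks_upper_lower_unitriangular_commutator [Ring R] :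
    (fromBlocks 1 1 0 1 * fromBlocks 1 0 1 1 * fromBlocks 1 (-1) 0 1 * fromBlocks 1 0 (-1) 1 :
      Matrix (n ⊕ n) (n ⊕ n) R) = fromBlocks 3 (-1) 1 0 := by
  norm_num [fromBlocks_multiply]

theorem eq_zero_of_fromBlocks_mulVec_eq_self [Ring R] {v : n ⊕ n → R}
    (hv : (fromBlocks 3 (-1) 1 0 : Matrix (n ⊕ n) (n ⊕ n) R) *ᵥ v = v) : v = 0 := by
  have hinv : (fromBlocks 1 (-1) 1 (-2) * (fromBlocks 3 (-1) 1 0 - 1) :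
      Matrix (n ⊕ n) (n ⊕ n) R) = 1 := by
    rw [← fromBlocks_one, sub_eq_add_neg, fromBlocks_neg, fromBlocks_add, fromBlocks_multiply]
    norm_num
  calc v = (fromBlocks 1 (-1) 1 (-2) * (fromBlocks 3 (-1) 1 0 - 1)) *ᵥ v := by
        rw [hinv, one_mulVec]
    _ = 0 := by rw [← mulVec_mulVec, sub_mulVec, hv, one_mulVec, sub_self, mulVec_zero]

end Matrix

theorem mem_GSpSet_of_mem_symplecticGroup {d ℓ : ℕ}
    {M : Matrix (Fin d ⊕ Fin d) (Fin d ⊕ Fin d) (ZMod ℓ)}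
    (hM : M ∈ Matrix.symplecticGroup (Fin d) (ZMod ℓ)) : M ∈ GSpSet d ℓ :=
  ⟨1, by simpa [SymplecticGroup.mem_iff] using hM⟩

theorem Cl_nonempty_of_mod_ell_rep_surjective_general
    (A : AbelianVarietyQ) (d ℓ : ℕ) (hℓ : ℓ.Prime)
    (ρ : (AlgebraicClosure ℚ ≃ₐ[ℚ] AlgebraicClosure ℚ) →*
      Matrix (Fin d ⊕ Fin d) (Fin d ⊕ Fin d) (ZMod ℓ))
    (e : A.tors ℓ ≃+ ((Fin d ⊕ Fin d) → ZMod ℓ))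
    (hcompat : ∀ σ (x : A.tors ℓ), e (A.galRep ℓ σ x) = (ρ σ).mulVec (e x))
    (hsurj : ∀ M ∈ GSpSet d ℓ, ∃ σ, ρ σ = M) :
    ∃ g ∈ A.Hl ℓ, ∀ x : A.tors ℓ, g x = x → x = 0 := by
  have : NeZero ℓ := ⟨hℓ.ne_zero⟩
  obtain ⟨σ, hσ⟩ := hsurj _ (mem_GSpSet_of_mem_symplecticGroup
    (Matrix.fromBlocks_upper_unitriangular_mem_symplecticGroup Matrix.transpose_one))
  obtain ⟨τ, hτ⟩ := hsurj _ (mem_GSpSet_of_mem_symplecticGroup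
    (Matrix.fromBlocks_lower_unitriangular_mem_symplecticGroup Matrix.transpose_one))
  have hρ : ρ ⁅σ, τ⁆ = Matrix.fromBlocks 3 (-1) 1 0 := by
    rw [ρ.map_commutatorElement_of_mul_eq_one (a := Matrix.fromBlocks 1 (-1) 0 1)
      (b := Matrix.fromBlocks 1 0 (-1) 1), hσ, hτ,
      Matrix.fromBlocks_upper_lower_unitriangular_commutator]
    · rw [hσ, Matrix.fromBlocks_upper_unitriangular_mul, add_neg_cancel, Matrix.fromBlocks_one]
    · rw [hτ, Matrix.fromBlocks_lower_unitriangular_mul, add_neg_cancel, Matrix.fromBlocks_one]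
  refine ⟨A.galRep ℓ ⁅σ, τ⁆, ⟨⁅σ, τ⁆,
    AlgEquiv.commutatorElement_mem_fixingSubgroup_adjoin_rootsOfUnity σ τ, rfl⟩, fun x hx => ?_⟩
  have hfix : (Matrix.fromBlocks 3 (-1) 1 0).mulVec (e x) = e x := by rw [← hρ, ← hcompat, hx]
  exact (map_eq_zero_iff e e.injective).1 (Matrix.eq_zero_of_fromBlocks_mulVec_eq_self hfix)

/-- Let `A/ℚ` be a principally polarized abelian variety of dimension `d`
(so that `A[ℓ] ≅ 𝔽_ℓ^{2d}` carries a symplectic pairing and the mod-`ℓ` representation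
`ρ̄_{A,ℓ} : Gal(ℚ̄/ℚ) → GSp_{2d}(𝔽_ℓ)` is the Galois action on `A[ℓ]` in suitable
coordinates).  If `ρ̄_{A,ℓ}` is surjective then `𝒞_ℓ(A) ≠ ∅`, i.e. there exists
`σ ∈ H_ℓ(A) = Gal(ℚ(A[ℓ])/ℚ(ζ_ℓ))` acting freely on `A[ℓ]`. -/
theorem Cl_nonempty_of_mod_ell_rep_surjective
    (A : AbelianVarietyQ) (d ℓ : ℕ) (hℓ : ℓ.Prime) (hd : 1 ≤ d)
    (ρ : (AlgebraicClosure ℚ ≃ₐ[ℚ] AlgebraicClosure ℚ) →*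
      Matrix (Fin d ⊕ Fin d) (Fin d ⊕ Fin d) (ZMod ℓ))
    (e : A.tors ℓ ≃+ ((Fin d ⊕ Fin d) → ZMod ℓ))
    (hcompat : ∀ σ (x : A.tors ℓ), e (A.galRep ℓ σ x) = (ρ σ).mulVec (e x))
    (hmem : ∀ σ, ρ σ ∈ GSpSet d ℓ)
    (hsurj : ∀ M ∈ GSpSet d ℓ, ∃ σ, ρ σ = M) :
    ∃ g ∈ A.Hl ℓ, ∀ x : A.tors ℓ, g x = x → x = 0 :=
  Cl_nonempty_of_mod_ell_rep_surjective_general A d ℓ hℓ ρ e hcompat hsurj
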